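/- arXiv:1106.1209 — 2 statements merged into one kernel-verified Lean document; each statement's English description precedes it below -/
import Mathlib

section
/- For real numbers a, c with 0 < c < 1, 0 < a < 1, and a ≥ c, one has 1 - a³/c² - (1-a)³/(1-c)² ≤ 0. -/
theorem stmt1 (a c : ℝ) (hc0 : 0 < c) (hc1 : c < 1) (ha0 : 0 < a) (ha1 : a < 1)
    (hac : a ≥ c) :
    1 - a^3 / c^2 - (1 - a)^3 / (1 - c)^2 ≤ 0 := by
  have h1 : (0:ℝ) < 1 - c := by linarith
  have hpos : (0:ℝ) ≤ (1 - 2*c)*a + 2*c - c^2 := by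
    nlinarith [mul_pos hc0 (by linarith : (0:ℝ) < 1 - a)]
  have key : 0 ≤ a^3 * (1-c)^2 + (1-a)^3 * c^2 - c^2 * (1-c)^2 := by
    nlinarith [mul_nonneg (sq_nonneg (a - c)) hpos]
  rw [← sub_nonneg]
  have h2 : 0 - (1 - a^3 / c^2 - (1 - a)^3 / (1 - c)^2)
      = (a^3 * (1-c)^2 + (1-a)^3 * c^2 - c^2 * (1-c)^2) / (c^2 * (1-c)^2) := by
    field_simp
    ring
  rw [h2]
  exact div_nonneg key (by positivity)
end

section
/- sup over 0 ≤ α < 1 of (3/4 + α + (3/4)α²)/(1 + α + α²) equals 5/6, approached as α → 1 but not attained on [0,1). -/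
lemma denom_pos (α : ℝ) (h : 0 ≤ α) : 0 < 1 + α + α^2 := by nlinarith [sq_nonneg α]

lemma flt (α : ℝ) (h0 : 0 ≤ α) (h1 : α < 1) :
    (3/4 + α + (3/4) * α^2) / (1 + α + α^2) < 5/6 := by
  rw [div_lt_iff₀ (denom_pos α h0)]
  nlinarith [sq_nonneg (1 - α)]

lemma ftend : Filter.Tendsto (fun α : ℝ => (3/4 + α + (3/4) * α^2) / (1 + α + α^2))
    (nhdsWithin 1 (Set.Iio 1)) (nhds (5/6)) := by
  have h : ContinuousAt (fun α : ℝ => (3/4 + α + (3/4) * α^2) / (1 + α + α^2)) 1 := by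
    apply ContinuousAt.div (by fun_prop) (by fun_prop)
    norm_num
  have := h.tendsto
  norm_num at this
  exact this.mono_left nhdsWithin_le_nhds

theorem stmt5 :
    IsLUB {y : ℝ | ∃ α : ℝ, 0 ≤ α ∧ α < 1 ∧
        y = (3/4 + α + (3/4) * α^2) / (1 + α + α^2)} (5/6) ∧
    (∀ α : ℝ, 0 ≤ α → α < 1 →
        (3/4 + α + (3/4) * α^2) / (1 + α + α^2) < 5/6) ∧
    Filter.Tendsto (fun α : ℝ => (3/4 + α + (3/4) * α^2) / (1 + α + α^2))
      (nhdsWithin 1 (Set.Iio 1)) (nhds (5/6)) := by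
  refine ⟨⟨?_, ?_⟩, fun α h0 h1 => flt α h0 h1, ftend⟩
  · rintro y ⟨α, h0, h1, rfl⟩
    exact (flt α h0 h1).le
  · intro b hb
    refine le_of_tendsto ftend ?_
    filter_upwards [self_mem_nhdsWithin,
      Ioo_mem_nhdsLT_of_mem (by norm_num : (1:ℝ) ∈ Set.Ioc 0 1)] with α h1 h0
    exact hb ⟨α, h0.1.le, h1, rfl⟩
end
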